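/- Let ρ > 0, λ > 0, μ > 0, γ ≥ 0, γ_w ≥ 0, and let ℓ : ℝ^d → ℝ be differentiable and μ-strongly convex. For w ∈ ℝ^d, let θ̂(w) denote the unique minimizer over θ ∈ ℝ^d of H(θ; w) := ℓ(θ) + γ·φ_ρ(θ) − λ·⟨θ, w⟩, and define F(w) := min_θ H(θ; w) + (λ/2)·‖w‖₂² + γ_w·φ_ρ(w). Then: (i) θ̂(w) exists and is unique for every w; (ii) F is differentiable with ∇F(w) = λ·(w − θ̂(w)) + γ_w·∇φ_ρ(w); (iii) ∇F is Lipschitz with constant L_F = λ + λ²/μ + γ_w/ρ; and (iv) if in addition λ < μ, then F is (λ(μ−λ)/μ)-strongly convex. -/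

import Mathlib

/-!
Put `G = ℓ + γ φ_ρ` and `H(θ; w) = G θ - λ⟪θ, w⟫`. Since `G` is `μ`-strongly convex, `H(·; w)` is
coercive, so it has a minimizer `θ̂(w)`, where its gradient vanishes; hence the quadratic growth
`H(θ̂(w); w) + μ/2 ‖θ - θ̂(w)‖² ≤ H(θ; w)`, which gives uniqueness. Adding the growth bounds at `w`
and `w'` shows that `θ̂` is `λ/μ`-Lipschitz. Evaluating them at `θ̂(v)` and using Young's inequality
traps the value `m(v) = H(θ̂(v); v)` between `m(w) - λ⟪θ̂(w), v - w⟫ - λ²/(2μ) ‖v - w‖²` and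
`m(w) - λ⟪θ̂(w), v - w⟫`. So `m + λ/2 ‖·‖²` lies between two paraboloids tangent at `w` with slope
`λ(w - θ̂(w))`; it is therefore differentiable there, and the lower one makes it
`(λ - λ²/μ)`-strongly convex. Adding the convex term `γ_w φ_ρ`, whose gradient is the coordinatewise
`tanh(·/ρ)` and is `1/ρ`-Lipschitz because `tanh' = 1/cosh² ≤ 1`, gives (ii)–(iv).
-/

open RealInnerProductSpace

namespace Real

theorem hasDerivAt_tanh (t : ℝ) : HasDerivAt tanh (1 / cosh t ^ 2) t := by
  have h := (hasDerivAt_sinh t).div (hasDerivAt_cosh t) (cosh_pos t).ne'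
  rw [← sq, ← sq, cosh_sq_sub_sinh_sq] at h
  exact funext tanh_eq_sinh_div_cosh ▸ h

theorem hasDerivAt_log_cosh (t : ℝ) : HasDerivAt (fun s => log (cosh s)) (tanh t) t := by
  simpa [tanh_eq_sinh_div_cosh] using (hasDerivAt_cosh t).log (cosh_pos t).ne'

theorem monotone_tanh : Monotone tanh :=
  monotone_of_deriv_nonneg (fun t => (hasDerivAt_tanh t).differentiableAt) fun t => by
    rw [(hasDerivAt_tanh t).deriv]
    positivity

theorem abs_tanh_sub_tanh_le (a b : ℝ) : |tanh a - tanh b| ≤ |a - b| := by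
  have hderiv_le : ∀ t ∈ Set.univ, ‖1 / cosh t ^ 2‖ ≤ 1 := fun t _ => by
    rw [norm_of_nonneg (by positivity), div_le_one (by positivity)]
    nlinarith [one_le_cosh t]
  simpa using Convex.norm_image_sub_le_of_norm_hasDerivWithin_le
    (fun t _ => (hasDerivAt_tanh t).hasDerivWithinAt) hderiv_le convex_univ
    (Set.mem_univ b) (Set.mem_univ a)

theorem log_cosh_add_tanh_mul_sub_le (a b : ℝ) :
    log (cosh a) + tanh a * (b - a) ≤ log (cosh b) := by
  have hdiff : Differentiable ℝ fun s => log (cosh s) :=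
    fun t => (hasDerivAt_log_cosh t).differentiableAt
  have hderiv : deriv (fun s => log (cosh s)) = tanh :=
    funext fun t => (hasDerivAt_log_cosh t).deriv
  rcases le_total a b with hab | hba
  · have := (convex_Ici a).mul_sub_le_image_sub_of_le_deriv hdiff.continuous.continuousOn
      hdiff.differentiableOn (fun t ht => by
        rw [hderiv]; exact monotone_tanh (by simpa using (interior_subset ht : t ∈ Set.Ici a)))
      a Set.self_mem_Ici b hab hab
    linarith
  · have := (convex_Iic a).image_sub_le_mul_sub_of_deriv_le hdiff.continuous.continuousOn
      hdiff.differentiableOn (fun t ht => by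
        rw [hderiv]; exact monotone_tanh (by simpa using (interior_subset ht : t ∈ Set.Iic a)))
      b hba a Set.self_mem_Iic hba
    linarith

end Real

section InnerProductSpace

variable {E : Type*} [NormedAddCommGroup E] [InnerProductSpace ℝ E]

theorem half_mul_norm_sq_eq (c : ℝ) (x y : E) :
    c / 2 * ‖y‖ ^ 2 = c / 2 * ‖x‖ ^ 2 + ⟪c • x, y - x⟫ + c / 2 * ‖y - x‖ ^ 2 := by
  rw [real_inner_smul_left, norm_sub_sq_real, real_inner_comm, inner_sub_left,
    real_inner_self_eq_norm_sq]
  ring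

theorem mul_inner_le_sq_add_sq {μ : ℝ} (hμ : 0 < μ) (c : ℝ) (x y : E) :
    c * ⟪x, y⟫ ≤ μ / 2 * ‖x‖ ^ 2 + c ^ 2 / (2 * μ) * ‖y‖ ^ 2 := by
  have h := norm_sub_sq_real (μ • x) (c • y)
  rw [norm_smul, norm_smul, real_inner_smul_left, real_inner_smul_right, Real.norm_eq_abs,
    Real.norm_eq_abs, mul_pow, mul_pow, sq_abs, sq_abs] at h
  have hgap : μ / 2 * ‖x‖ ^ 2 + c ^ 2 / (2 * μ) * ‖y‖ ^ 2 - c * ⟪x, y⟫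
      = ‖μ • x - c • y‖ ^ 2 / (2 * μ) := by
    rw [h]; field_simp; ring
  linarith [show 0 ≤ ‖μ • x - c • y‖ ^ 2 / (2 * μ) by positivity]

theorem norm_smul_sub_add_smul_sub_le {θhat ψ : E → E} {lam c K L : ℝ} (hlam : 0 ≤ lam)
    (hc : 0 ≤ c) (hθ : ∀ x y, ‖θhat x - θhat y‖ ≤ K * ‖x - y‖)
    (hψ : ∀ x y, ‖ψ x - ψ y‖ ≤ L * ‖x - y‖) (x y : E) :
    ‖(lam • (x - θhat x) + c • ψ x) - (lam • (y - θhat y) + c • ψ y)‖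
      ≤ (lam + lam * K + c * L) * ‖x - y‖ :=
  calc _ = ‖lam • (x - y) - lam • (θhat x - θhat y) + c • (ψ x - ψ y)‖ := by congr 1; module
    _ ≤ ‖lam • (x - y)‖ + ‖lam • (θhat x - θhat y)‖ + ‖c • (ψ x - ψ y)‖ :=
      norm_add_le_of_le (norm_sub_le _ _) le_rfl
    _ ≤ lam * ‖x - y‖ + lam * (K * ‖x - y‖) + c * (L * ‖x - y‖) := by
      rw [norm_smul, norm_smul, norm_smul, Real.norm_of_nonneg hlam, Real.norm_of_nonneg hc]
      gcongr
      exacts [hθ x y, hψ x y]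
    _ = _ := by ring

/-- `f` lies above its tangent paraboloids of curvature `a`, the tangent slopes being given by `g`:
`a`-strong convexity in first-order form. The curvature `a` may be negative. -/
def TangentLowerBound (f : E → ℝ) (g : E → E) (a : ℝ) : Prop :=
  ∀ x y, f x + ⟪g x, y - x⟫ + a / 2 * ‖y - x‖ ^ 2 ≤ f y

namespace TangentLowerBound

variable {f f₁ f₂ : E → ℝ} {g g₁ g₂ : E → E} {a a₁ a₂ : ℝ}

theorem mono (hf : TangentLowerBound f g a) {b : ℝ} (hba : b ≤ a) : TangentLowerBound f g b :=
  fun x y => by nlinarith [hf x y, sq_nonneg ‖y - x‖]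

theorem add (h₁ : TangentLowerBound f₁ g₁ a₁) (h₂ : TangentLowerBound f₂ g₂ a₂) :
    TangentLowerBound (fun x => f₁ x + f₂ x) (fun x => g₁ x + g₂ x) (a₁ + a₂) := fun x y => by
  rw [inner_add_left]
  linarith [h₁ x y, h₂ x y]

theorem const_mul (hf : TangentLowerBound f g a) {c : ℝ} (hc : 0 ≤ c) :
    TangentLowerBound (fun x => c * f x) (fun x => c • g x) (c * a) := fun x y => by
  rw [real_inner_smul_left]
  nlinarith [mul_le_mul_of_nonneg_left (hf x y) hc]

theorem sub_mul_inner (hf : TangentLowerBound f g a) (c : ℝ) (u : E) :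
    TangentLowerBound (fun x => f x - c * ⟪x, u⟫) (fun x => g x - c • u) a := fun x y => by
  have h := hf x y
  simp only [inner_sub_left, real_inner_smul_left, inner_sub_right, real_inner_comm u] at h ⊢
  linarith

end TangentLowerBound

/-- `θhat w` minimizes the tilted function `θ ↦ G θ - lam * ⟪θ, w⟫` (the paper's `H(·; w)`), with
quadratic growth of rate `μ` around it. -/
def IsTiltedArgmin (G : E → ℝ) (lam μ : ℝ) (θhat : E → E) : Prop :=
  ∀ w θ, G (θhat w) - lam * ⟪θhat w, w⟫ + μ / 2 * ‖θ - θhat w‖ ^ 2 ≤ G θ - lam * ⟪θ, w⟫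

namespace IsTiltedArgmin

variable {G : E → ℝ} {lam μ : ℝ} {θhat : E → E}

theorem le (h : IsTiltedArgmin G lam μ θhat) (hμ : 0 ≤ μ) (w θ : E) :
    G (θhat w) - lam * ⟪θhat w, w⟫ ≤ G θ - lam * ⟪θ, w⟫ := by
  nlinarith [h w θ, sq_nonneg ‖θ - θhat w‖]

theorem eq_of_forall_le (h : IsTiltedArgmin G lam μ θhat) (hμ : 0 < μ) {w θ' : E}
    (hθ' : ∀ θ, G θ' - lam * ⟪θ', w⟫ ≤ G θ - lam * ⟪θ, w⟫) : θ' = θhat w := by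
  have hsq : ‖θ' - θhat w‖ ^ 2 ≤ 0 := by nlinarith [h w θ', hθ' (θhat w)]
  rw [← sub_eq_zero, ← norm_eq_zero]
  exact pow_eq_zero_iff two_ne_zero |>.mp (le_antisymm hsq (sq_nonneg _))

theorem norm_sub_le (h : IsTiltedArgmin G lam μ θhat) (hμ : 0 < μ) (hlam : 0 ≤ lam) (w w' : E) :
    ‖θhat w - θhat w'‖ ≤ lam / μ * ‖w - w'‖ := by
  set δ := θhat w - θhat w'
  have hmono : μ * ‖δ‖ ^ 2 ≤ lam * ⟪δ, w - w'⟫ := by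
    have h₁ := h w (θhat w')
    have h₂ := h w' (θhat w)
    rw [← norm_neg, neg_sub] at h₁
    simp only [δ, inner_sub_left, inner_sub_right] at *
    nlinarith
  have hcs : lam * ⟪δ, w - w'⟫ ≤ lam * (‖δ‖ * ‖w - w'‖) :=
    mul_le_mul_of_nonneg_left (real_inner_le_norm _ _) hlam
  rw [div_mul_eq_mul_div, le_div_iff₀ hμ]
  rcases (norm_nonneg δ).eq_or_lt with hδ | hδ
  · rw [← hδ, zero_mul]; positivity
  · exact le_of_mul_le_mul_right (by nlinarith) hδ

theorem value_le (h : IsTiltedArgmin G lam μ θhat) (hμ : 0 ≤ μ) (w v : E) :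
    G (θhat v) - lam * ⟪θhat v, v⟫ ≤ G (θhat w) - lam * ⟪θhat w, w⟫ - lam * ⟪θhat w, v - w⟫ := by
  have := h.le hμ v (θhat w)
  rw [inner_sub_right]
  linarith

theorem le_value (h : IsTiltedArgmin G lam μ θhat) (hμ : 0 < μ) (w v : E) :
    G (θhat w) - lam * ⟪θhat w, w⟫ - lam * ⟪θhat w, v - w⟫ - lam ^ 2 / (2 * μ) * ‖v - w‖ ^ 2
      ≤ G (θhat v) - lam * ⟪θhat v, v⟫ := by
  have hgrowth := h w (θhat v)
  have hyoung := mul_inner_le_sq_add_sq hμ lam (θhat v - θhat w) (v - w)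
  simp only [inner_sub_left, inner_sub_right] at *
  linarith

theorem tangentLowerBound (h : IsTiltedArgmin G lam μ θhat) (hμ : 0 < μ) :
    TangentLowerBound (fun w => G (θhat w) - lam * ⟪θhat w, w⟫ + lam / 2 * ‖w‖ ^ 2)
      (fun w => lam • (w - θhat w)) (lam - lam ^ 2 / μ) := fun w v => by
  have hsq := half_mul_norm_sq_eq lam w v
  have hval := h.le_value hμ w v
  have hcoef : (lam - lam ^ 2 / μ) / 2 = lam / 2 - lam ^ 2 / (2 * μ) := by ring
  rw [real_inner_smul_left] at hsq ⊢
  rw [inner_sub_left, hcoef]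
  linarith

end IsTiltedArgmin

end InnerProductSpace

section Gradient

variable {E : Type*} [NormedAddCommGroup E] [InnerProductSpace ℝ E] [CompleteSpace E]

theorem HasGradientAt.add {f g : E → ℝ} {f' g' x : E} (hf : HasGradientAt f f' x)
    (hg : HasGradientAt g g' x) : HasGradientAt (fun y => f y + g y) (f' + g') x := by
  rw [hasGradientAt_iff_hasFDerivAt] at *
  simpa only [map_add] using hf.fun_add hg

theorem HasGradientAt.sub {f g : E → ℝ} {f' g' x : E} (hf : HasGradientAt f f' x)
    (hg : HasGradientAt g g' x) : HasGradientAt (fun y => f y - g y) (f' - g') x := by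
  rw [hasGradientAt_iff_hasFDerivAt] at *
  simpa only [map_sub] using hf.fun_sub hg

theorem HasGradientAt.const_mul {f : E → ℝ} {f' x : E} (c : ℝ) (hf : HasGradientAt f f' x) :
    HasGradientAt (fun y => c * f y) (c • f') x := by
  rw [hasGradientAt_iff_hasFDerivAt] at *
  simpa only [map_smul] using hf.const_mul c

theorem hasGradientAt_of_sq_sandwich {f : E → ℝ} {g x : E} {a b : ℝ}
    (hlow : ∀ y, f x + ⟪g, y - x⟫ + a / 2 * ‖y - x‖ ^ 2 ≤ f y)
    (hupp : ∀ y, f y ≤ f x + ⟪g, y - x⟫ + b / 2 * ‖y - x‖ ^ 2) : HasGradientAt f g x := by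
  rw [hasGradientAt_iff_isLittleO]
  refine (Asymptotics.IsBigO.of_bound ((|a| + |b|) / 2)
    (Filter.Eventually.of_forall fun y => ?_)).trans_isLittleO
    (Asymptotics.isLittleO_pow_sub_sub x one_lt_two)
  rw [Real.norm_eq_abs, Real.norm_of_nonneg (by positivity), abs_le]
  have hsq : 0 ≤ ‖y - x‖ ^ 2 := by positivity
  constructor <;>
    nlinarith [hlow y, hupp y, neg_abs_le a, le_abs_self b, abs_nonneg a, abs_nonneg b]

theorem hasGradientAt_inner_left (u x : E) : HasGradientAt (fun y => ⟪y, u⟫) u x := by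
  have h : ∀ y, ⟪y, u⟫ = ⟪x, u⟫ + ⟪u, y - x⟫ + 0 / 2 * ‖y - x‖ ^ 2 := fun y => by
    rw [inner_sub_right, real_inner_comm u y, real_inner_comm u x]; ring
  exact hasGradientAt_of_sq_sandwich (fun y => (h y).ge) (fun y => (h y).le)

/-- The lower bound at `y`, read backwards, together with the Lipschitz bound on `g` gives the
matching upper paraboloid at `x`. -/
theorem TangentLowerBound.hasGradientAt {f : E → ℝ} {g : E → E} {a L : ℝ}
    (hf : TangentLowerBound f g a) (hg : ∀ x y, ‖g x - g y‖ ≤ L * ‖x - y‖) (x : E) :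
    HasGradientAt f (g x) x := by
  refine hasGradientAt_of_sq_sandwich (hf x) (b := 2 * L - a) fun y => ?_
  have hcs : ⟪g y - g x, y - x⟫ ≤ L * ‖y - x‖ ^ 2 := by
    nlinarith [real_inner_le_norm (g y - g x) (y - x), hg y x, norm_nonneg (y - x)]
  have h := hf y x
  rw [← norm_neg, neg_sub] at h
  rw [inner_sub_left] at hcs
  rw [← neg_sub y x, inner_neg_right] at h
  linarith

theorem TangentLowerBound.add_sq_le_of_forall_le {f : E → ℝ} {g : E → E} {a : ℝ} {x₀ : E}
    (hf : TangentLowerBound f g a) (hg : HasGradientAt f (g x₀) x₀) (hmin : ∀ x, f x₀ ≤ f x)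
    (x : E) :
    f x₀ + a / 2 * ‖x - x₀‖ ^ 2 ≤ f x := by
  have hstat : g x₀ = 0 := by
    have := IsLocalMin.hasFDerivAt_eq_zero (Filter.Eventually.of_forall hmin)
      (hasGradientAt_iff_hasFDerivAt.mp hg)
    simpa using this
  simpa [hstat] using hf x₀ x

theorem IsTiltedArgmin.hasGradientAt {G : E → ℝ} {lam μ : ℝ} {θhat : E → E}
    (h : IsTiltedArgmin G lam μ θhat) (hμ : 0 < μ) (w : E) :
    HasGradientAt (fun w => G (θhat w) - lam * ⟪θhat w, w⟫ + lam / 2 * ‖w‖ ^ 2)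
      (lam • (w - θhat w)) w := by
  refine hasGradientAt_of_sq_sandwich (h.tangentLowerBound hμ w) (b := lam) fun v => ?_
  have hsq := half_mul_norm_sq_eq lam w v
  have hval := h.value_le hμ.le w v
  rw [real_inner_smul_left] at hsq ⊢
  rw [inner_sub_left]
  linarith

end Gradient

section ProperSpace

variable {E : Type*} [NormedAddCommGroup E] [InnerProductSpace ℝ E] [ProperSpace E]

theorem TangentLowerBound.exists_forall_le {f : E → ℝ} {g : E → E} {a : ℝ}
    (hf : TangentLowerBound f g a) (ha : 0 < a) (hcont : Continuous f) : ∃ x₀, ∀ x, f x₀ ≤ f x := by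
  refine hcont.exists_forall_le' (0 : E) ?_
  rw [Filter.eventually_iff, Filter.mem_cocompact]
  refine ⟨Metric.closedBall 0 (2 * ‖g 0‖ / a), isCompact_closedBall _ _, fun x hx => ?_⟩
  simp only [Set.mem_compl_iff, Metric.mem_closedBall, dist_zero_right, not_le,
    div_lt_iff₀ ha] at hx
  have hinner : -(‖g 0‖ * ‖x‖) ≤ ⟪g 0, x⟫ := (abs_le.mp (abs_real_inner_le_norm _ _)).1
  have := hf 0 x
  rw [sub_zero] at this
  show f 0 ≤ f x
  nlinarith [norm_nonneg x]

theorem exists_isTiltedArgmin {G : E → ℝ} {gG : E → E} {μ : ℝ} (hG : TangentLowerBound G gG μ)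
    (hμ : 0 < μ) (hgrad : ∀ x, HasGradientAt G (gG x) x) (lam : ℝ) :
    ∃ θhat, IsTiltedArgmin G lam μ θhat := by
  have hgradH : ∀ w θ, HasGradientAt (fun θ => G θ - lam * ⟪θ, w⟫) (gG θ - lam • w) θ :=
    fun w θ => (hgrad θ).sub ((hasGradientAt_inner_left w θ).const_mul lam)
  have hH : ∀ w, TangentLowerBound (fun θ => G θ - lam * ⟪θ, w⟫) (fun θ => gG θ - lam • w) μ :=
    fun w => hG.sub_mul_inner lam w
  choose θhat hmin using fun w => (hH w).exists_forall_le hμ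
    (continuous_iff_continuousAt.2 fun θ => (hgradH w θ).continuousAt)
  exact ⟨θhat, fun w θ => (hH w).add_sq_le_of_forall_le (hgradH w _) (hmin w) θ⟩

end ProperSpace

section SmoothL1

variable {ι : Type*} [Fintype ι] {ρ : ℝ}

noncomputable def smoothL1 (ρ : ℝ) (x : EuclideanSpace ℝ ι) : ℝ :=
  ρ * ∑ n, Real.log (Real.cosh (x n / ρ))

noncomputable def smoothL1Grad (ρ : ℝ) (x : EuclideanSpace ℝ ι) : EuclideanSpace ℝ ι :=
  WithLp.toLp 2 fun n => Real.tanh (x n / ρ)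

theorem tangentLowerBound_smoothL1 (hρ : 0 < ρ) :
    TangentLowerBound (smoothL1 (ι := ι) ρ) (smoothL1Grad ρ) 0 := fun x y => by
  simp only [smoothL1, smoothL1Grad, PiLp.inner_apply, PiLp.sub_apply, RCLike.inner_apply,
    conj_trivial, zero_div, zero_mul, add_zero, Finset.mul_sum, ← Finset.sum_add_distrib]
  refine Finset.sum_le_sum fun n _ => ?_
  have h := mul_le_mul_of_nonneg_left (Real.log_cosh_add_tanh_mul_sub_le (x n / ρ) (y n / ρ)) hρ.le
  have hscale : ρ * (Real.tanh (x n / ρ) * (y n / ρ - x n / ρ))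
      = (y n - x n) * Real.tanh (x n / ρ) := by
    field_simp
  rw [mul_add, hscale] at h
  linarith

theorem norm_smoothL1Grad_sub_le (hρ : 0 < ρ) (x y : EuclideanSpace ℝ ι) :
    ‖smoothL1Grad ρ x - smoothL1Grad ρ y‖ ≤ ρ⁻¹ * ‖x - y‖ := by
  refine le_of_sq_le_sq ?_ (by positivity)
  rw [mul_pow, EuclideanSpace.real_norm_sq_eq, EuclideanSpace.real_norm_sq_eq, Finset.mul_sum]
  refine Finset.sum_le_sum fun n _ => ?_
  have hscale : ρ⁻¹ ^ 2 * (x n - y n) ^ 2 = (x n / ρ - y n / ρ) ^ 2 := by ring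
  simp only [smoothL1Grad, PiLp.sub_apply, hscale]
  exact sq_le_sq.mpr (Real.abs_tanh_sub_tanh_le (x n / ρ) (y n / ρ))

theorem hasGradientAt_smoothL1 (hρ : 0 < ρ) (x : EuclideanSpace ℝ ι) :
    HasGradientAt (smoothL1 ρ) (smoothL1Grad ρ x) x :=
  (tangentLowerBound_smoothL1 hρ).hasGradientAt (norm_smoothL1Grad_sub_le hρ) x

end SmoothL1

/-- Proposition 1 / Moreau-type envelope: Let ρ, λ, μ > 0, γ, γ_w ≥ 0,
and let ℓ : ℝ^d → ℝ be differentiable and μ-strongly convex.  For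
H(θ; w) = ℓ(θ) + γ·φ_ρ(θ) − λ·⟨θ, w⟩  and  F(w) = min_θ H(θ; w) + (λ/2)‖w‖² + γ_w·φ_ρ(w),
(i) the minimizer θ̂(w) of H(·; w) exists and is unique;
(ii) F is differentiable with ∇F(w) = λ(w − θ̂(w)) + γ_w·∇φ_ρ(w);
(iii) ∇F is Lipschitz with constant L_F = λ + λ²/μ + γ_w/ρ;
(iv) if λ < μ then F is (λ(μ−λ)/μ)-strongly convex. -/
theorem stmt7 (d : ℕ) (ρ lam μ γ γw : ℝ)
    (hρ : 0 < ρ) (hlam : 0 < lam) (hμ : 0 < μ) (hγ : 0 ≤ γ) (hγw : 0 ≤ γw)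
    (ℓ : EuclideanSpace ℝ (Fin d) → ℝ)
    (gℓ : EuclideanSpace ℝ (Fin d) → EuclideanSpace ℝ (Fin d))
    (hdiff : ∀ x, HasGradientAt ℓ (gℓ x) x)
    (hsc : ∀ x y, ℓ y ≥ ℓ x + ⟪gℓ x, y - x⟫ + μ / 2 * ‖y - x‖ ^ 2)
    (φ : EuclideanSpace ℝ (Fin d) → ℝ)
    (hφ : ∀ x, φ x = ρ * ∑ n, Real.log (Real.cosh (x n / ρ)))
    (gradφ : EuclideanSpace ℝ (Fin d) → EuclideanSpace ℝ (Fin d))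
    (hgradφ : ∀ x n, gradφ x n = Real.tanh (x n / ρ))
    (H : EuclideanSpace ℝ (Fin d) → EuclideanSpace ℝ (Fin d) → ℝ)
    (hH : ∀ θ w, H θ w = ℓ θ + γ * φ θ - lam * ⟪θ, w⟫) :
    ∃ θhat : EuclideanSpace ℝ (Fin d) → EuclideanSpace ℝ (Fin d),
      -- (i) existence and uniqueness of the minimizer of H(·; w)
      (∀ w θ, H (θhat w) w ≤ H θ w) ∧
      (∀ w θ', (∀ θ, H θ' w ≤ H θ w) → θ' = θhat w) ∧
      -- (ii) F is differentiable with the stated gradient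
      (∀ w, HasGradientAt
        (fun v => H (θhat v) v + lam / 2 * ‖v‖ ^ 2 + γw * φ v)
        (lam • (w - θhat w) + γw • gradφ w) w) ∧
      -- (iii) ∇F is (λ + λ²/μ + γ_w/ρ)-Lipschitz
      (∀ w w', ‖(lam • (w - θhat w) + γw • gradφ w)
            - (lam • (w' - θhat w') + γw • gradφ w')‖ ≤
          (lam + lam ^ 2 / μ + γw / ρ) * ‖w - w'‖) ∧
      -- (iv) if λ < μ then F is (λ(μ−λ)/μ)-strongly convex
      (lam < μ → ∀ w w',
        H (θhat w') w' + lam / 2 * ‖w'‖ ^ 2 + γw * φ w' ≥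
          (H (θhat w) w + lam / 2 * ‖w‖ ^ 2 + γw * φ w)
          + ⟪lam • (w - θhat w) + γw • gradφ w, w' - w⟫
          + (lam * (μ - lam) / μ) / 2 * ‖w' - w‖ ^ 2) := by
  obtain rfl : φ = smoothL1 ρ := funext hφ
  obtain rfl : gradφ = smoothL1Grad ρ := funext fun x => PiLp.ext (hgradφ x)
  obtain rfl : H = fun θ w => ℓ θ + γ * smoothL1 ρ θ - lam * ⟪θ, w⟫ :=
    funext fun θ => funext (hH θ)
  have hφcvx := tangentLowerBound_smoothL1 (ι := Fin d) hρ
  have hG : TangentLowerBound (fun θ => ℓ θ + γ * smoothL1 ρ θ)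
      (fun θ => gℓ θ + γ • smoothL1Grad ρ θ) μ :=
    (TangentLowerBound.add hsc (hφcvx.const_mul hγ)).mono (by simp)
  obtain ⟨θhat, hθhat⟩ := exists_isTiltedArgmin hG hμ
    (fun θ => (hdiff θ).add ((hasGradientAt_smoothL1 hρ θ).const_mul γ)) lam
  refine ⟨θhat, hθhat.le hμ.le, fun w θ' => hθhat.eq_of_forall_le hμ, fun w => ?_,
    fun w w' => ?_, fun _ => ?_⟩
  · exact (hθhat.hasGradientAt hμ w).add ((hasGradientAt_smoothL1 hρ w).const_mul γw)
  · calc _ ≤ (lam + lam * (lam / μ) + γw * ρ⁻¹) * ‖w - w'‖ :=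
          norm_smul_sub_add_smul_sub_le hlam.le hγw (hθhat.norm_sub_le hμ hlam.le)
            (norm_smoothL1Grad_sub_le hρ) w w'
      _ = _ := by ring
  · exact ((hθhat.tangentLowerBound hμ).add (hφcvx.const_mul hγw)).mono
      (le_of_eq (by field_simp; ring))
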